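/- Let s₁, s₂ > 1 and t₁, t₂ > 1/2. There exists a constant C = C(s₁,s₂,t₁,t₂) such that for every Schwartz function u on ℝ³, ‖u‖_{L^∞(ℝ³)} ≤ C ( ‖û‖_{L²(ℝ³)} + ‖ |ξ_h|^{s₁} û ‖_{L²(ℝ³)} + ‖ |ξ₃|^{t₁} û ‖_{L²(ℝ³)} + ‖ |ξ_h|^{s₂} |ξ₃|^{t₂} û ‖_{L²(ℝ³)} ), where û is the Fourier transform of u and ξ_h = (ξ₁,ξ₂), so that by Plancherel the right-hand side equals C(‖u‖_{L²} + ‖Λ_h^{s₁}u‖_{L²} + ‖Λ_v^{t₁}u‖_{L²} + ‖Λ_h^{s₂}Λ_v^{t₂}u‖_{L²}). -/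

import Mathlib

open MeasureTheory Real ENNReal Filter
open scoped ENNReal NNReal Topology FourierTransform

noncomputable section

/-- Euclidean space `ℝ³`. -/
abbrev E3 : Type := EuclideanSpace ℝ (Fin 3)

/-- Partial derivative `∂ᵢ f` of a scalar function. -/
def pd (i : Fin 3) (f : E3 → ℝ) (x : E3) : ℝ :=
  fderiv ℝ f x (EuclideanSpace.single i 1)

/-- Partial derivative `∂ᵢ uⱼ` of a component of a vector field. -/
def pdv (i : Fin 3) (u : E3 → E3) (j : Fin 3) (x : E3) : ℝ :=
  pd i (fun y => u y j) x

/-- Horizontal Laplacian `Δ_h = ∂₁² + ∂₂²`. -/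
def lapH (f : E3 → ℝ) (x : E3) : ℝ :=
  pd 0 (pd 0 f) x + pd 1 (pd 1 f) x

/-- Divergence of a vector field. -/
def divg (u : E3 → E3) (x : E3) : ℝ := ∑ i, pd i (fun y => u y i) x

/-- Curl (vorticity) of a vector field. -/
def curl (u : E3 → E3) (x : E3) : E3 :=
  (WithLp.equiv 2 (Fin 3 → ℝ)).symm
    ![pdv 1 u 2 x - pdv 2 u 1 x,
      pdv 2 u 0 x - pdv 0 u 2 x,
      pdv 0 u 1 x - pdv 1 u 0 x]

/-- The full gradient (Jacobian) of a vector field, with the Euclidean (Frobenius) norm. -/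
def fullGrad (u : E3 → E3) (x : E3) : EuclideanSpace ℝ (Fin 3 × Fin 3) :=
  (WithLp.equiv 2 (Fin 3 × Fin 3 → ℝ)).symm (fun ij => pdv ij.2 u ij.1 x)

/-- The full gradient of a scalar function. -/
def gradS (f : E3 → ℝ) (x : E3) : E3 :=
  (WithLp.equiv 2 (Fin 3 → ℝ)).symm (fun i => pd i f x)

/-- Horizontal gradient `∇_h f = (∂₁ f, ∂₂ f)` of a scalar function. -/
def hGradS (f : E3 → ℝ) (x : E3) : EuclideanSpace ℝ (Fin 2) :=
  (WithLp.equiv 2 (Fin 2 → ℝ)).symm (fun i => pd i.castSucc f x)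

/-- Horizontal gradient of a vector field. -/
def hGradV (u : E3 → E3) (x : E3) : EuclideanSpace ℝ (Fin 2 × Fin 3) :=
  (WithLp.equiv 2 (Fin 2 × Fin 3 → ℝ)).symm (fun ij => pdv ij.1.castSucc u ij.2 x)

/-- Distance to the vertical axis: `r = √(x₁² + x₂²)`. -/
def rad (x : E3) : ℝ := Real.sqrt (x 0 ^ 2 + x 1 ^ 2)

/-- Radial component `u_r = u · e_r` of a vector field. -/
def uR (u : E3 → E3) (x : E3) : ℝ := (u x 0 * x 0 + u x 1 * x 1) / rad x

/-- Angular component `ω_θ = (curl u) · e_θ` of the vorticity. -/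
def omTheta (u : E3 → E3) (x : E3) : ℝ :=
  (x 0 * curl u x 1 - x 1 * curl u x 0) / rad x

/-- `Γ = ω_θ / r`. -/
def Gam (u : E3 → E3) : E3 → ℝ := fun x => omTheta u x / rad x

/-- An axisymmetric vector field without swirl:
`u = u_r(r,z) e_r + u_z(r,z) e_z`. -/
def IsAxisymNoSwirl (u : E3 → E3) : Prop :=
  ∃ a b : ℝ → ℝ → ℝ, ∀ x : E3,
    u x 0 = a (rad x) (x 2) * (x 0 / rad x) ∧
    u x 1 = a (rad x) (x 2) * (x 1 / rad x) ∧
    u x 2 = b (rad x) (x 2)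

/-- An axisymmetric scalar function: it depends only on `(r, x₃)`. -/
def IsAxisymScalar (f : E3 → ℝ) : Prop :=
  ∃ g : ℝ → ℝ → ℝ, ∀ x : E3, f x = g (rad x) (x 2)

/-- A (pointwise, smooth) solution of the Boussinesq system with horizontal
viscosity (HBS) on the time set `S`:
`∂ₜu + (u·∇)u − Δ_h u + ∇Π = ρ e₃`, `∂ₜρ + u·∇ρ = 0`, `div u = 0`,
with data `(u₀, ρ₀)`. -/
structure IsHBS (u : ℝ → E3 → E3) (ρ Pr : ℝ → E3 → ℝ)
    (u₀ : E3 → E3) (ρ₀ : E3 → ℝ) (S : Set ℝ) : Prop where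
  smooth_u : ContDiff ℝ (⊤ : ℕ∞) (fun p : ℝ × E3 => u p.1 p.2)
  smooth_ρ : ContDiff ℝ (⊤ : ℕ∞) (fun p : ℝ × E3 => ρ p.1 p.2)
  smooth_Pr : ContDiff ℝ (⊤ : ℕ∞) (fun p : ℝ × E3 => Pr p.1 p.2)
  momentum : ∀ t ∈ S, ∀ x : E3, ∀ j : Fin 3,
    deriv (fun s => u s x j) t + (∑ i, u t x i * pdv i (u t) j x)
      - lapH (fun y => u t y j) x + pd j (Pr t) x
      = ρ t x * (if j = 2 then 1 else 0)
  transport : ∀ t ∈ S, ∀ x : E3,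
    deriv (fun s => ρ s x) t + (∑ i, u t x i * pd i (ρ t) x) = 0
  divfree : ∀ t ∈ S, ∀ x : E3, divg (u t) x = 0
  init_u : u 0 = u₀
  init_ρ : ρ 0 = ρ₀

namespace Stmt12Aux

lemma rpow_aux {c r : ℝ} (hc : 0 ≤ c) (hr : 0 < r) :
    (1 + c) ^ (2 * r) ≤ 4 ^ r * (1 + c ^ r) ^ 2 := by
  have hcr := Real.rpow_nonneg hc r
  have h2r : (0:ℝ) ≤ 2 ^ r := Real.rpow_nonneg (by norm_num) r
  have h1 : (1 + c) ^ r ≤ 2 ^ r * (1 + c ^ r) := by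
    rcases le_total c 1 with h | h
    · calc (1+c)^r ≤ 2 ^ r := Real.rpow_le_rpow (by linarith) (by linarith) hr.le
        _ ≤ 2^r * (1 + c^r) := le_mul_of_one_le_right h2r (by linarith)
    · calc (1+c)^r ≤ (2*c) ^ r := Real.rpow_le_rpow (by linarith) (by linarith) hr.le
        _ = 2^r * c^r := Real.mul_rpow (by norm_num) hc
        _ ≤ 2^r * (1+c^r) := by nlinarith
  have h2 : (1 + c) ^ (2*r) = ((1+c)^r)^2 := by
    rw [mul_comm, Real.rpow_mul (by linarith), Real.rpow_two]
  have h4 : (4:ℝ) ^ r = 2^r * 2^r := by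
    rw [← Real.mul_rpow (by norm_num) (by norm_num)]; norm_num
  have h5 : (0:ℝ) ≤ (1+c)^r := Real.rpow_nonneg (by linarith) r
  rw [h2, h4]
  nlinarith [sq_nonneg ((1+c)^r - 2^r*(1+c^r))]

lemma inv_aux {c r : ℝ} (hc : 0 ≤ c) (hr : 0 < r) :
    ((1 + c ^ r)⁻¹) ^ 2 ≤ 4 ^ r * (1 + c) ^ (-(2 * r)) := by
  have key := rpow_aux hc hr
  have h2 : (0:ℝ) < (1+c^r)^2 := by positivity
  have h3 : (0:ℝ) < (1+c)^(2*r) := by positivity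
  rw [Real.rpow_neg (by linarith), inv_pow, ← div_eq_mul_inv, le_div_iff₀ h3,
    inv_mul_le_iff₀ h2]
  linarith

lemma lint1D {τ : ℝ} (hτ : 1/2 < τ) :
    ∫⁻ t : ℝ, ENNReal.ofReal (((1 + |t| ^ τ)⁻¹) ^ 2) < ⊤ := by
  have hτ0 : 0 < τ := by linarith
  have hint : Integrable (fun t : ℝ => (4:ℝ) ^ τ * (1 + ‖t‖) ^ (-(2 * τ))) := by
    exact (integrable_one_add_norm (E := ℝ) (by rw [Module.finrank_self]; norm_num; linarith : (Module.finrank ℝ ℝ : ℝ) < 2 * τ)).const_mul _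
  refine lt_of_le_of_lt (lintegral_mono fun t => ?_) hint.lintegral_lt_top
  exact ENNReal.ofReal_le_ofReal (by simpa using inv_aux (abs_nonneg t) hτ0)

lemma lint2D {σ : ℝ} (hσ : 1 < σ) :
    ∫⁻ y : Fin 2 → ℝ,
      ENNReal.ofReal (((1 + Real.sqrt (y 0 ^ 2 + y 1 ^ 2) ^ σ)⁻¹) ^ 2) < ⊤ := by
  have hσ0 : 0 < σ := by linarith
  have hmp := (EuclideanSpace.volume_preserving_symm_measurableEquiv_toLp (Fin 2))
  rw [← hmp.lintegral_comp_emb (MeasurableEquiv.measurableEmbedding _)]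
  have hnorm : ∀ z : EuclideanSpace ℝ (Fin 2),
      Real.sqrt ((z 0) ^ 2 + (z 1) ^ 2) = ‖z‖ := by
    intro z
    rw [EuclideanSpace.norm_eq]
    simp [Fin.sum_univ_two, sq_abs]
  have hint : Integrable (fun z : EuclideanSpace ℝ (Fin 2) =>
      (4:ℝ) ^ σ * (1 + ‖z‖) ^ (-(2 * σ))) := by
    refine (integrable_one_add_norm ?_).const_mul _
    rw [finrank_euclideanSpace_fin]; norm_num; linarith
  refine lt_of_le_of_lt (lintegral_mono fun z => ?_) hint.lintegral_lt_top
  refine ENNReal.ofReal_le_ofReal ?_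
  have : (MeasurableEquiv.toLp 2 (Fin 2 → ℝ)).symm z 0 = z 0 := rfl
  have h2 : (MeasurableEquiv.toLp 2 (Fin 2 → ℝ)).symm z 1 = z 1 := rfl
  rw [this, h2, hnorm z]
  exact inv_aux (norm_nonneg z) hσ0




lemma lint3D {σ τ : ℝ} (hσ : 1 < σ) (hτ : 1/2 < τ) :
    ∫⁻ ξ : E3,
      (ENNReal.ofReal ((1 + Real.sqrt (ξ 0 ^ 2 + ξ 1 ^ 2) ^ σ)⁻¹)
        * ENNReal.ofReal ((1 + |ξ 2| ^ τ)⁻¹)) ^ 2 < ⊤ := by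
  have hσ0 : (0:ℝ) ≤ σ := by linarith
  have hτ0 : (0:ℝ) ≤ τ := by linarith
  set G : (Fin 3 → ℝ) → ℝ≥0∞ := fun x =>
    (ENNReal.ofReal ((1 + Real.sqrt (x 0 ^ 2 + x 1 ^ 2) ^ σ)⁻¹)
        * ENNReal.ofReal ((1 + |x 2| ^ τ)⁻¹)) ^ 2 with hG
  have step1 : ∫⁻ ξ : E3,
      (ENNReal.ofReal ((1 + Real.sqrt (ξ 0 ^ 2 + ξ 1 ^ 2) ^ σ)⁻¹)
        * ENNReal.ofReal ((1 + |ξ 2| ^ τ)⁻¹)) ^ 2 = ∫⁻ x : Fin 3 → ℝ, G x :=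
    (EuclideanSpace.volume_preserving_symm_measurableEquiv_toLp (Fin 3)).lintegral_comp_emb
      (MeasurableEquiv.measurableEmbedding _) G
  have step2 : ∫⁻ x : Fin 3 → ℝ, G x
      = ∫⁻ p : ℝ × (Fin 2 → ℝ), G ((MeasurableEquiv.piFinSuccAbove (fun _ : Fin 3 => ℝ) 2).symm p) :=
    ((MeasurePreserving.symm (MeasurableEquiv.piFinSuccAbove (fun _ : Fin 3 => ℝ) 2)
      (volume_preserving_piFinSuccAbove (fun _ : Fin 3 => ℝ) 2)).lintegral_comp_emb
      (MeasurableEquiv.measurableEmbedding _) G).symm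
  have hf : Measurable fun t : ℝ => ENNReal.ofReal (((1 + |t| ^ τ)⁻¹) ^ 2) := by
    apply (Continuous.measurable ?_)
    exact (ENNReal.continuous_ofReal.comp
      (((continuous_const.add (continuous_abs.rpow_const fun x => Or.inr hτ0)).inv₀
        (fun x => (by positivity : (0:ℝ) < 1 + |x| ^ τ).ne')).pow 2))
  have hg : Measurable fun y : Fin 2 → ℝ =>
      ENNReal.ofReal (((1 + Real.sqrt (y 0 ^ 2 + y 1 ^ 2) ^ σ)⁻¹) ^ 2) := by
    apply (Continuous.measurable ?_)
    refine ENNReal.continuous_ofReal.comp ?_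
    have hc : Continuous fun y : Fin 2 → ℝ => Real.sqrt (y 0 ^ 2 + y 1 ^ 2) :=
      (((continuous_apply (0 : Fin 2)).pow 2).add ((continuous_apply (1 : Fin 2)).pow 2)).sqrt
    exact ((continuous_const.add (hc.rpow_const fun x => Or.inr hσ0)).inv₀ fun x => (by positivity : (0:ℝ) < 1 + Real.sqrt (x 0 ^ 2 + x 1 ^ 2) ^ σ).ne').pow 2
  have step3 : ∫⁻ p : ℝ × (Fin 2 → ℝ),
        G ((MeasurableEquiv.piFinSuccAbove (fun _ : Fin 3 => ℝ) 2).symm p)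
      = (∫⁻ t : ℝ, ENNReal.ofReal (((1 + |t| ^ τ)⁻¹) ^ 2))
        * ∫⁻ y : Fin 2 → ℝ,
            ENNReal.ofReal (((1 + Real.sqrt (y 0 ^ 2 + y 1 ^ 2) ^ σ)⁻¹) ^ 2) := by
    rw [← lintegral_prod_mul hf.aemeasurable hg.aemeasurable, ← Measure.volume_eq_prod]
    refine lintegral_congr fun p => ?_
    obtain ⟨t, y⟩ := p
    show (ENNReal.ofReal ((1 + Real.sqrt (y 0 ^ 2 + y 1 ^ 2) ^ σ)⁻¹)
        * ENNReal.ofReal ((1 + |t| ^ τ)⁻¹)) ^ 2 = _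
    rw [mul_pow, ← ENNReal.ofReal_pow (by positivity), ← ENNReal.ofReal_pow (by positivity)]
    ring
  rw [step1, step2, step3]
  exact ENNReal.mul_lt_top (lint1D hτ) (lint2D hσ)


lemma weight_aux {s₁ s₂ t₁ t₂ a b : ℝ} (hs₁ : 1 < s₁) (hs₂ : 1 < s₂)
    (ht₁ : 1/2 < t₁) (ht₂ : 1/2 < t₂) (ha : 0 ≤ a) (hb : 0 ≤ b) :
    (1 + a ^ min s₁ s₂) * (1 + b ^ min t₁ t₂)
      ≤ 4 * (1 + a ^ s₁ + b ^ t₁ + a ^ s₂ * b ^ t₂) := by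
  set σ := min s₁ s₂ with hσ
  set τ := min t₁ t₂ with hτ
  have hσ0 : 0 ≤ σ := le_trans (by norm_num) (le_min hs₁.le hs₂.le)
  have hτ0 : 0 ≤ τ := le_trans (by norm_num) (le_min ht₁.le ht₂.le)
  have n1 : 0 ≤ a ^ s₁ := Real.rpow_nonneg ha _
  have n2 : 0 ≤ b ^ t₁ := Real.rpow_nonneg hb _
  have n3 : 0 ≤ a ^ s₂ * b ^ t₂ :=
    mul_nonneg (Real.rpow_nonneg ha _) (Real.rpow_nonneg hb _)
  set S := 1 + a ^ s₁ + b ^ t₁ + a ^ s₂ * b ^ t₂ with hS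
  have hS1 : 1 ≤ S := by simp only [hS]; linarith
  have h2 : a ^ σ ≤ S := by
    rcases le_total a 1 with h | h
    · exact le_trans (Real.rpow_le_one ha h hσ0) hS1
    · have : a ^ σ ≤ a ^ s₁ := Real.rpow_le_rpow_of_exponent_le h (min_le_left _ _)
      simp only [hS]; linarith
  have h3 : b ^ τ ≤ S := by
    rcases le_total b 1 with h | h
    · exact le_trans (Real.rpow_le_one hb h hτ0) hS1
    · have : b ^ τ ≤ b ^ t₁ := Real.rpow_le_rpow_of_exponent_le h (min_le_left _ _)
      simp only [hS]; linarith
  have h4 : a ^ σ * b ^ τ ≤ S := by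
    have pa : 0 ≤ a ^ σ := Real.rpow_nonneg ha _
    have pb : 0 ≤ b ^ τ := Real.rpow_nonneg hb _
    rcases le_total a 1 with hA | hA <;> rcases le_total b 1 with hB | hB
    · have := mul_le_one₀ (Real.rpow_le_one ha hA hσ0) pb (Real.rpow_le_one hb hB hτ0)
      linarith
    · have hbb : b ^ τ ≤ b ^ t₁ := Real.rpow_le_rpow_of_exponent_le hB (min_le_left _ _)
      have : a ^ σ * b ^ τ ≤ 1 * b ^ t₁ :=
        mul_le_mul (Real.rpow_le_one ha hA hσ0) hbb pb zero_le_one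
      simp only [hS]; linarith
    · have haa : a ^ σ ≤ a ^ s₁ := Real.rpow_le_rpow_of_exponent_le hA (min_le_left _ _)
      have : a ^ σ * b ^ τ ≤ a ^ s₁ * 1 :=
        mul_le_mul haa (Real.rpow_le_one hb hB hτ0) pb n1
      simp only [hS]; linarith
    · have haa : a ^ σ ≤ a ^ s₂ := Real.rpow_le_rpow_of_exponent_le hA (min_le_right _ _)
      have hbb : b ^ τ ≤ b ^ t₂ := Real.rpow_le_rpow_of_exponent_le hB (min_le_right _ _)
      have : a ^ σ * b ^ τ ≤ a ^ s₂ * b ^ t₂ :=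
        mul_le_mul haa hbb pb (Real.rpow_nonneg ha _)
      simp only [hS]; linarith
  nlinarith

lemma stepA (u : SchwartzMap E3 ℂ) :
    eLpNorm (fun x => u x) ⊤ volume
      ≤ ∫⁻ ξ : E3, (‖𝓕 (fun x => u x) ξ‖₊ : ℝ≥0∞) := by
  have hFi : Integrable (𝓕 (⇑u)) := by
    have := (SchwartzMap.fourierTransformCLM ℂ u).integrable (μ := volume)
    rwa [SchwartzMap.fourierTransformCLM_apply, SchwartzMap.fourier_coe] at this
  have hinv : ∀ x, u x = 𝓕⁻ (𝓕 ⇑u) x := by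
    intro x
    rw [Continuous.fourierInv_fourier_eq u.continuous u.integrable hFi]
  have hb : ∀ x : E3, ‖u x‖ ≤ ∫ ξ : E3, ‖𝓕 (⇑u) ξ‖ := by
    intro x
    rw [hinv x, Real.fourierInv_eq_fourier_neg]
    exact VectorFourier.norm_fourierIntegral_le_integral_norm _ _ _ _ _
  calc eLpNorm (fun x => u x) ⊤ volume
      ≤ ENNReal.ofReal (∫ ξ : E3, ‖𝓕 (⇑u) ξ‖) := by
        rw [eLpNorm_exponent_top]
        exact eLpNormEssSup_le_of_ae_bound (ae_of_all _ hb)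
    _ = ∫⁻ ξ : E3, (‖𝓕 (fun x => u x) ξ‖₊ : ℝ≥0∞) :=
        ofReal_integral_norm_eq_lintegral_enorm hFi

lemma two_cast (z : ℝ≥0∞) : z ^ (2:ℝ) = z ^ (2:ℕ) := by
  rw [show (2:ℝ) = ((2:ℕ):ℝ) by norm_num, ENNReal.rpow_natCast]

lemma sixteen_rpow_half : (16:ℝ≥0∞) ^ (1/2:ℝ) = 4 := by
  rw [show (16:ℝ≥0∞) = (4:ℝ≥0∞) ^ (2:ℕ) by norm_num, ← ENNReal.rpow_natCast,
    ← ENNReal.rpow_mul]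
  norm_num

lemma coord_cont (i : Fin 3) : Continuous fun ξ : E3 => ξ i :=
  (EuclideanSpace.proj (𝕜 := ℝ) i).continuous



end Stmt12Aux

open Stmt12Aux in
/-- anisotropic Sobolev embedding
`‖u‖_∞ ≤ C(‖û‖₂ + ‖|ξ_h|^{s₁}û‖₂ + ‖|ξ₃|^{t₁}û‖₂ + ‖|ξ_h|^{s₂}|ξ₃|^{t₂}û‖₂)`. -/
theorem stmt_12 (s₁ s₂ t₁ t₂ : ℝ) (hs₁ : 1 < s₁) (hs₂ : 1 < s₂)
    (ht₁ : 1/2 < t₁) (ht₂ : 1/2 < t₂) :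
    ∃ C : ℝ, 0 < C ∧ ∀ u : SchwartzMap E3 ℂ,
      eLpNorm (fun x => u x) ⊤ volume
        ≤ ENNReal.ofReal C *
          ((∫⁻ ξ : E3,
              (‖𝓕 (fun x => u x) ξ‖₊ : ℝ≥0∞) ^ 2) ^ (1/2 : ℝ)
           + (∫⁻ ξ : E3,
              (ENNReal.ofReal (Real.sqrt (ξ 0 ^ 2 + ξ 1 ^ 2) ^ s₁)) ^ 2
                * (‖𝓕 (fun x => u x) ξ‖₊ : ℝ≥0∞) ^ 2) ^ (1/2 : ℝ)
           + (∫⁻ ξ : E3,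
              (ENNReal.ofReal (|ξ 2| ^ t₁)) ^ 2
                * (‖𝓕 (fun x => u x) ξ‖₊ : ℝ≥0∞) ^ 2) ^ (1/2 : ℝ)
           + (∫⁻ ξ : E3,
              (ENNReal.ofReal (Real.sqrt (ξ 0 ^ 2 + ξ 1 ^ 2) ^ s₂ * |ξ 2| ^ t₂)) ^ 2
                * (‖𝓕 (fun x => u x) ξ‖₊ : ℝ≥0∞) ^ 2) ^ (1/2 : ℝ)) := by
  have hσ1 : 1 < min s₁ s₂ := lt_min hs₁ hs₂
  have hτ1 : 1/2 < min t₁ t₂ := lt_min ht₁ ht₂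
  set σ := min s₁ s₂ with hσdef
  set τ := min t₁ t₂ with hτdef
  have hσ0 : (0:ℝ) ≤ σ := by linarith
  have hτ0 : (0:ℝ) ≤ τ := by linarith
  have hMfin := lint3D (σ := σ) (τ := τ) hσ1 hτ1
  set M : ℝ≥0∞ := (∫⁻ ξ : E3,
      (ENNReal.ofReal ((1 + Real.sqrt (ξ 0 ^ 2 + ξ 1 ^ 2) ^ σ)⁻¹)
        * ENNReal.ofReal ((1 + |ξ 2| ^ τ)⁻¹)) ^ 2) ^ (1/2 : ℝ) with hMdef
  have hMtop : M ≠ ⊤ := ENNReal.rpow_ne_top_of_nonneg (by norm_num) hMfin.ne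
  refine ⟨4 * (M.toReal + 1), by positivity, fun u => ?_⟩
  -- abbreviations
  set f : E3 → ℂ := fun ξ => 𝓕 (fun x => u x) ξ with hfdef
  set n : E3 → ℝ≥0∞ := fun ξ => (‖f ξ‖₊ : ℝ≥0∞) with hndef
  set a : E3 → ℝ := fun ξ => Real.sqrt (ξ 0 ^ 2 + ξ 1 ^ 2) with hadef
  set b : E3 → ℝ := fun ξ => |ξ 2| with hbdef
  have ha0 : ∀ ξ, 0 ≤ a ξ := fun ξ => Real.sqrt_nonneg _
  have hb0 : ∀ ξ, 0 ≤ b ξ := fun ξ => abs_nonneg _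
  set S : E3 → ℝ := fun ξ => 1 + a ξ ^ s₁ + b ξ ^ t₁ + a ξ ^ s₂ * b ξ ^ t₂ with hSdef
  have hS1 : ∀ ξ, 1 ≤ S ξ := by
    intro ξ
    have := Real.rpow_nonneg (ha0 ξ) s₁
    have := Real.rpow_nonneg (hb0 ξ) t₁
    have := mul_nonneg (Real.rpow_nonneg (ha0 ξ) s₂) (Real.rpow_nonneg (hb0 ξ) t₂)
    simp only [hSdef]; linarith
  have hSpos : ∀ ξ, 0 < S ξ := fun ξ => lt_of_lt_of_le one_pos (hS1 ξ)
  set w : E3 → ℝ≥0∞ := fun ξ => ENNReal.ofReal (S ξ) with hwdef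
  have hw0 : ∀ ξ, w ξ ≠ 0 := fun ξ => (ENNReal.ofReal_pos.mpr (hSpos ξ)).ne'
  have hwt : ∀ ξ, w ξ ≠ ⊤ := fun ξ => ENNReal.ofReal_ne_top
  set A : E3 → ℝ≥0∞ := fun ξ => ENNReal.ofReal (a ξ ^ s₁) with hAdef
  set B : E3 → ℝ≥0∞ := fun ξ => ENNReal.ofReal (b ξ ^ t₁) with hBdef
  set Cc : E3 → ℝ≥0∞ := fun ξ => ENNReal.ofReal (a ξ ^ s₂ * b ξ ^ t₂) with hCdef
  have hwsum : ∀ ξ, w ξ = 1 + A ξ + B ξ + Cc ξ := by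
    intro ξ
    simp only [hwdef, hAdef, hBdef, hCdef, hSdef]
    rw [ENNReal.ofReal_add, ENNReal.ofReal_add, ENNReal.ofReal_add, ENNReal.ofReal_one]
    · exact zero_le_one
    · exact Real.rpow_nonneg (ha0 ξ) _
    · positivity
    · exact Real.rpow_nonneg (hb0 ξ) _
    · positivity
    · exact mul_nonneg (Real.rpow_nonneg (ha0 ξ) _) (Real.rpow_nonneg (hb0 ξ) _)
  set P : E3 → ℝ≥0∞ := fun ξ =>
    ENNReal.ofReal ((1 + a ξ ^ σ)⁻¹) * ENNReal.ofReal ((1 + b ξ ^ τ)⁻¹) with hPdef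
  -- pointwise bound on w⁻¹
  have hwinv : ∀ ξ, (w ξ)⁻¹ ≤ 4 * P ξ := by
    intro ξ
    have hpa : (0:ℝ) < 1 + a ξ ^ σ := by positivity
    have hpb : (0:ℝ) < 1 + b ξ ^ τ := by positivity
    have hkey : (1 + a ξ ^ σ) * (1 + b ξ ^ τ) ≤ 4 * S ξ :=
      weight_aux hs₁ hs₂ ht₁ ht₂ (ha0 ξ) (hb0 ξ)
    have hreal : (S ξ)⁻¹ ≤ 4 * ((1 + a ξ ^ σ)⁻¹ * (1 + b ξ ^ τ)⁻¹) := by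
      rw [← mul_inv, ← div_eq_mul_inv, le_div_iff₀ (by positivity),
        inv_mul_le_iff₀ (hSpos ξ)]
      linarith
    calc (w ξ)⁻¹ = ENNReal.ofReal ((S ξ)⁻¹) := by
          rw [hwdef, ENNReal.ofReal_inv_of_pos (hSpos ξ)]
      _ ≤ ENNReal.ofReal (4 * ((1 + a ξ ^ σ)⁻¹ * (1 + b ξ ^ τ)⁻¹)) :=
          ENNReal.ofReal_le_ofReal hreal
      _ = 4 * P ξ := by
          rw [ENNReal.ofReal_mul (by norm_num), ENNReal.ofReal_mul (by positivity),
            ENNReal.ofReal_ofNat, hPdef]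
  -- measurability
  have hfc : Continuous f := by
    have := (SchwartzMap.fourierTransformCLM ℂ u).continuous
    rwa [SchwartzMap.fourierTransformCLM_apply, SchwartzMap.fourier_coe] at this
  have hnm : Measurable n := hfc.measurable.enorm
  have hac : Continuous a :=
    (((coord_cont 0).pow 2).add ((coord_cont 1).pow 2)).sqrt
  have hbc : Continuous b := (coord_cont 2).abs
  have hAm : Measurable A :=
    (ENNReal.continuous_ofReal.comp
      (hac.rpow_const fun x => Or.inr (by linarith))).measurable
  have hBm : Measurable B :=
    (ENNReal.continuous_ofReal.comp
      (hbc.rpow_const fun x => Or.inr (by linarith))).measurable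
  have hCm : Measurable Cc :=
    (ENNReal.continuous_ofReal.comp
      ((hac.rpow_const fun x => Or.inr (by linarith)).mul
        (hbc.rpow_const fun x => Or.inr (by linarith)))).measurable
  have hSc : Continuous S := by
    refine ((continuous_const.add ?_).add ?_).add (Continuous.mul ?_ ?_)
    · exact hac.rpow_const fun x => Or.inr (by linarith)
    · exact hbc.rpow_const fun x => Or.inr (by linarith)
    · exact hac.rpow_const fun x => Or.inr (by linarith)
    · exact hbc.rpow_const fun x => Or.inr (by linarith)
  have hwm : Measurable w := (ENNReal.continuous_ofReal.comp hSc).measurable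
  have hconj : Real.HolderConjugate 2 2 := Real.HolderConjugate.two_two
  have hHolder : ∫⁻ ξ : E3, n ξ
      ≤ (∫⁻ ξ : E3, ((w ξ)⁻¹) ^ (2:ℝ)) ^ (1/2:ℝ)
        * (∫⁻ ξ : E3, (w ξ * n ξ) ^ (2:ℝ)) ^ (1/2:ℝ) := by
    have heq : ∀ ξ, n ξ = (w ξ)⁻¹ * (w ξ * n ξ) := by
      intro ξ; rw [← mul_assoc, ENNReal.inv_mul_cancel (hw0 ξ) (hwt ξ), one_mul]
    calc ∫⁻ ξ : E3, n ξ
        = ∫⁻ ξ : E3, ((fun ξ => (w ξ)⁻¹) * fun ξ => w ξ * n ξ) ξ :=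
          lintegral_congr fun ξ => by simp only [Pi.mul_apply]; exact heq ξ
      _ ≤ _ := ENNReal.lintegral_mul_le_Lp_mul_Lq volume hconj
          hwm.inv.aemeasurable (hwm.mul hnm).aemeasurable
  have hfac1 : (∫⁻ ξ : E3, ((w ξ)⁻¹) ^ (2:ℝ)) ^ (1/2:ℝ) ≤ 4 * M := by
    have hpt : ∀ ξ, ((w ξ)⁻¹) ^ (2:ℝ) ≤ 16 * (P ξ) ^ (2:ℕ) := by
      intro ξ
      rw [two_cast]
      calc ((w ξ)⁻¹) ^ (2:ℕ) ≤ (4 * P ξ) ^ (2:ℕ) := pow_le_pow_left' (hwinv ξ) 2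
        _ = 16 * (P ξ) ^ (2:ℕ) := by rw [mul_pow]; norm_num
    calc (∫⁻ ξ : E3, ((w ξ)⁻¹) ^ (2:ℝ)) ^ (1/2:ℝ)
        ≤ (∫⁻ ξ : E3, 16 * (P ξ) ^ (2:ℕ)) ^ (1/2:ℝ) :=
          ENNReal.rpow_le_rpow (lintegral_mono hpt) (by norm_num)
      _ = (16 * ∫⁻ ξ : E3, (P ξ) ^ (2:ℕ)) ^ (1/2:ℝ) := by
          rw [lintegral_const_mul' _ _ (by norm_num)]
      _ = 4 * M := by
          rw [ENNReal.mul_rpow_of_nonneg _ _ (by norm_num), sixteen_rpow_half, hMdef]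
  have mink : ∀ (g h : E3 → ℝ≥0∞), AEMeasurable g volume → AEMeasurable h volume →
      (∫⁻ ξ : E3, (g ξ + h ξ) ^ (2:ℝ)) ^ (1/2:ℝ)
        ≤ (∫⁻ ξ : E3, (g ξ) ^ (2:ℝ)) ^ (1/2:ℝ) + (∫⁻ ξ : E3, (h ξ) ^ (2:ℝ)) ^ (1/2:ℝ) := by
    intro g h hg hh
    have := ENNReal.lintegral_Lp_add_le hg hh (by norm_num : (1:ℝ) ≤ 2)
    simpa only [Pi.add_apply] using this
  have hdecomp : ∀ ξ, w ξ * n ξ = (n ξ + A ξ * n ξ + B ξ * n ξ) + Cc ξ * n ξ := by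
    intro ξ; rw [hwsum ξ]; ring
  have hfac2 : (∫⁻ ξ : E3, (w ξ * n ξ) ^ (2:ℝ)) ^ (1/2:ℝ)
      ≤ (∫⁻ ξ : E3, (n ξ) ^ (2:ℝ)) ^ (1/2:ℝ)
        + (∫⁻ ξ : E3, (A ξ * n ξ) ^ (2:ℝ)) ^ (1/2:ℝ)
        + (∫⁻ ξ : E3, (B ξ * n ξ) ^ (2:ℝ)) ^ (1/2:ℝ)
        + (∫⁻ ξ : E3, (Cc ξ * n ξ) ^ (2:ℝ)) ^ (1/2:ℝ) := by
    have h1 : (∫⁻ ξ : E3, (w ξ * n ξ) ^ (2:ℝ))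
        = ∫⁻ ξ : E3, ((n ξ + A ξ * n ξ + B ξ * n ξ) + Cc ξ * n ξ) ^ (2:ℝ) :=
      lintegral_congr fun ξ => by rw [hdecomp ξ]
    rw [h1]
    calc (∫⁻ ξ : E3, ((n ξ + A ξ * n ξ + B ξ * n ξ) + Cc ξ * n ξ) ^ (2:ℝ)) ^ (1/2:ℝ)
        ≤ (∫⁻ ξ : E3, (n ξ + A ξ * n ξ + B ξ * n ξ) ^ (2:ℝ)) ^ (1/2:ℝ)
            + (∫⁻ ξ : E3, (Cc ξ * n ξ) ^ (2:ℝ)) ^ (1/2:ℝ) :=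
          mink _ _ ((hnm.add (hAm.mul hnm)).add (hBm.mul hnm)).aemeasurable
            (hCm.mul hnm).aemeasurable
      _ ≤ ((∫⁻ ξ : E3, (n ξ + A ξ * n ξ) ^ (2:ℝ)) ^ (1/2:ℝ)
            + (∫⁻ ξ : E3, (B ξ * n ξ) ^ (2:ℝ)) ^ (1/2:ℝ))
            + (∫⁻ ξ : E3, (Cc ξ * n ξ) ^ (2:ℝ)) ^ (1/2:ℝ) :=
          add_le_add_left (mink _ _ (hnm.add (hAm.mul hnm)).aemeasurable
            (hBm.mul hnm).aemeasurable) _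
      _ ≤ (((∫⁻ ξ : E3, (n ξ) ^ (2:ℝ)) ^ (1/2:ℝ)
            + (∫⁻ ξ : E3, (A ξ * n ξ) ^ (2:ℝ)) ^ (1/2:ℝ))
            + (∫⁻ ξ : E3, (B ξ * n ξ) ^ (2:ℝ)) ^ (1/2:ℝ))
            + (∫⁻ ξ : E3, (Cc ξ * n ξ) ^ (2:ℝ)) ^ (1/2:ℝ) :=
          add_le_add_left (add_le_add_left
            (mink _ _ hnm.aemeasurable (hAm.mul hnm).aemeasurable) _) _
  have hT0 : (∫⁻ ξ : E3, (n ξ) ^ (2:ℝ)) ^ (1/2:ℝ)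
      = (∫⁻ ξ : E3, (‖𝓕 (fun x => u x) ξ‖₊ : ℝ≥0∞) ^ 2) ^ (1/2:ℝ) := by
    congr 1
    exact lintegral_congr fun ξ => by rw [two_cast]
  have hT1 : (∫⁻ ξ : E3, (A ξ * n ξ) ^ (2:ℝ)) ^ (1/2:ℝ)
      = (∫⁻ ξ : E3, (ENNReal.ofReal (Real.sqrt (ξ 0 ^ 2 + ξ 1 ^ 2) ^ s₁)) ^ 2
          * (‖𝓕 (fun x => u x) ξ‖₊ : ℝ≥0∞) ^ 2) ^ (1/2:ℝ) := by
    congr 1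
    exact lintegral_congr fun ξ => by
      rw [two_cast, mul_pow]
  have hT2 : (∫⁻ ξ : E3, (B ξ * n ξ) ^ (2:ℝ)) ^ (1/2:ℝ)
      = (∫⁻ ξ : E3, (ENNReal.ofReal (|ξ 2| ^ t₁)) ^ 2
          * (‖𝓕 (fun x => u x) ξ‖₊ : ℝ≥0∞) ^ 2) ^ (1/2:ℝ) := by
    congr 1
    exact lintegral_congr fun ξ => by
      rw [two_cast, mul_pow]
  have hT3 : (∫⁻ ξ : E3, (Cc ξ * n ξ) ^ (2:ℝ)) ^ (1/2:ℝ)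
      = (∫⁻ ξ : E3, (ENNReal.ofReal (Real.sqrt (ξ 0 ^ 2 + ξ 1 ^ 2) ^ s₂ * |ξ 2| ^ t₂)) ^ 2
          * (‖𝓕 (fun x => u x) ξ‖₊ : ℝ≥0∞) ^ 2) ^ (1/2:ℝ) := by
    congr 1
    exact lintegral_congr fun ξ => by
      rw [two_cast, mul_pow]
  have hconst : 4 * M ≤ ENNReal.ofReal (4 * (M.toReal + 1)) := by
    rw [ENNReal.ofReal_mul (by norm_num), ENNReal.ofReal_ofNat]
    refine mul_le_mul_right ?_ 4
    conv_lhs => rw [← ENNReal.ofReal_toReal hMtop]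
    exact ENNReal.ofReal_le_ofReal (by linarith)
  calc eLpNorm (fun x => u x) ⊤ volume
      ≤ ∫⁻ ξ : E3, n ξ := by simpa only [hndef, hfdef] using stepA u
    _ ≤ (∫⁻ ξ : E3, ((w ξ)⁻¹) ^ (2:ℝ)) ^ (1/2:ℝ)
        * (∫⁻ ξ : E3, (w ξ * n ξ) ^ (2:ℝ)) ^ (1/2:ℝ) := hHolder
    _ ≤ (4 * M) * ((∫⁻ ξ : E3, (n ξ) ^ (2:ℝ)) ^ (1/2:ℝ)
        + (∫⁻ ξ : E3, (A ξ * n ξ) ^ (2:ℝ)) ^ (1/2:ℝ)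
        + (∫⁻ ξ : E3, (B ξ * n ξ) ^ (2:ℝ)) ^ (1/2:ℝ)
        + (∫⁻ ξ : E3, (Cc ξ * n ξ) ^ (2:ℝ)) ^ (1/2:ℝ)) := mul_le_mul' hfac1 hfac2
    _ ≤ ENNReal.ofReal (4 * (M.toReal + 1)) * ((∫⁻ ξ : E3, (n ξ) ^ (2:ℝ)) ^ (1/2:ℝ)
        + (∫⁻ ξ : E3, (A ξ * n ξ) ^ (2:ℝ)) ^ (1/2:ℝ)
        + (∫⁻ ξ : E3, (B ξ * n ξ) ^ (2:ℝ)) ^ (1/2:ℝ)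
        + (∫⁻ ξ : E3, (Cc ξ * n ξ) ^ (2:ℝ)) ^ (1/2:ℝ)) := mul_le_mul_left hconst _
    _ = _ := by rw [hT0, hT1, hT2, hT3]
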